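/- Boundedness of Bregman extragradient iterates: suppose ω : ℝ^d → ℝ is strongly convex with modulus μ > 0, F : ℝ^d → ℝ^d is λ-relatively Lipschitz with respect to ω and monotone, the set {u : F(u) = 0} is nonempty, and the step sizes satisfy 0 < λα_k ≤ 1 for all k. Then the sequence {u_k} generated by the BEG method is bounded. -/

import Mathlib

open scoped RealInnerProductSpace

/-- `vs` is a subgradient of `ω` at `v`. -/
def IsSubgrad {d : ℕ} (ω : EuclideanSpace ℝ (Fin d) → ℝ)
    (v vs : EuclideanSpace ℝ (Fin d)) : Prop :=
  ∀ w, ω v + ⟪vs, w - v⟫ ≤ ω w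

/-- The Bregman distance `D_ω^{vs}(u, v) = ω(u) − ω(v) − ⟨vs, u − v⟩`. -/
noncomputable def breg {d : ℕ} (ω : EuclideanSpace ℝ (Fin d) → ℝ)
    (vs u v : EuclideanSpace ℝ (Fin d)) : ℝ :=
  ω u - ω v - ⟪vs, u - v⟫

/-- `F` is `lam`-relatively Lipschitz with respect to `ω`. -/
def RelLip {d : ℕ} (lam : ℝ)
    (F : EuclideanSpace ℝ (Fin d) → EuclideanSpace ℝ (Fin d))
    (ω : EuclideanSpace ℝ (Fin d) → ℝ) : Prop :=
  ∀ u v z us vs, IsSubgrad ω u us → IsSubgrad ω v vs →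
    ⟪F v - F u, v - z⟫ ≤ lam * (breg ω us v u + breg ω vs z v)

/-!
Fix a zero `z` of `F`. The Bregman distance `D_k = D_ω^{u_k*}(z, u_k)` does not increase along
the BEG iterates: the three-point identity writes `D_{k+1} - D_k` as minus two Bregman
distances, minus `α_k ⟪F ū_k, ū_k - z⟫ ≤ 0` (monotonicity), plus a cross term that relative
Lipschitz continuity bounds by `λ α_k ≤ 1` times those two distances. Strong convexity gives
`μ/2 ‖u_k - z‖² ≤ D_k ≤ D_0`, so the iterates stay in a ball around `z`.
-/

section Bregman

variable {d : ℕ} {ω : EuclideanSpace ℝ (Fin d) → ℝ}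

lemma IsSubgrad.breg_nonneg {v vs : EuclideanSpace ℝ (Fin d)} (h : IsSubgrad ω v vs)
    (w : EuclideanSpace ℝ (Fin d)) : 0 ≤ breg ω vs w v := by
  have := h w
  unfold breg
  linarith

lemma IsSubgrad.sq_norm_sub_le_breg {μ : ℝ} (hω : StrongConvexOn Set.univ μ ω)
    {v vs : EuclideanSpace ℝ (Fin d)} (h : IsSubgrad ω v vs) (w : EuclideanSpace ℝ (Fin d)) :
    μ / 2 * ‖w - v‖ ^ 2 ≤ breg ω vs w v := by
  have along_segment : ∀ t ∈ Set.Ioo (0 : ℝ) 1,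
      (1 - t) * (μ / 2 * ‖w - v‖ ^ 2) ≤ breg ω vs w v := by
    rintro t ⟨ht0, ht1⟩
    have hconv := hω.2 (Set.mem_univ w) (Set.mem_univ v) ht0.le (sub_nonneg.2 ht1.le)
      (add_sub_cancel t 1)
    have hsub := h (t • w + (1 - t) • v)
    rw [show t • w + (1 - t) • v - v = t • (w - v) by module, real_inner_smul_right] at hsub
    simp only [smul_eq_mul] at hconv
    have : t * ((1 - t) * (μ / 2 * ‖w - v‖ ^ 2)) ≤ t * breg ω vs w v := by
      unfold breg
      linarith
    exact le_of_mul_le_mul_left this ht0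
  have hlim : Filter.Tendsto (fun t : ℝ ↦ (1 - t) * (μ / 2 * ‖w - v‖ ^ 2))
      (nhdsWithin 0 (Set.Ioi 0)) (nhds (μ / 2 * ‖w - v‖ ^ 2)) :=
    tendsto_nhdsWithin_of_tendsto_nhds <|
      ((continuous_const.sub continuous_id).mul continuous_const).tendsto' _ _ (by simp)
  refine le_of_tendsto hlim ?_
  filter_upwards [Ioo_mem_nhdsGT zero_lt_one] with t ht using along_segment t ht

lemma breg_extragradient_step_eq (F : EuclideanSpace ℝ (Fin d) → EuclideanSpace ℝ (Fin d))
    (α : ℝ) (z u ubar u' us : EuclideanSpace ℝ (Fin d)) :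
    breg ω (us - α • F ubar) z u' =
      breg ω us z u - breg ω us ubar u - breg ω (us - α • F u) u' ubar
        - α * ⟪F ubar, ubar - z⟫ + α * ⟪F ubar - F u, ubar - u'⟫ := by
  simp only [breg, inner_sub_left, inner_sub_right, real_inner_smul_left]
  ring

lemma breg_extragradient_step_le {F : EuclideanSpace ℝ (Fin d) → EuclideanSpace ℝ (Fin d)}
    {lam α : ℝ} (hF : RelLip lam F ω) (hα : 0 ≤ α) (hstep : lam * α ≤ 1)
    {z u ubar u' us : EuclideanSpace ℝ (Fin d)} (hz : 0 ≤ ⟪F ubar, ubar - z⟫)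
    (hu : IsSubgrad ω u us) (hubar : IsSubgrad ω ubar (us - α • F u)) :
    breg ω (us - α • F ubar) z u' ≤ breg ω us z u := by
  have h₁ := hu.breg_nonneg ubar
  have h₂ := hubar.breg_nonneg u'
  have hcross : α * ⟪F ubar - F u, ubar - u'⟫ ≤
      breg ω us ubar u + breg ω (us - α • F u) u' ubar :=
    calc α * ⟪F ubar - F u, ubar - u'⟫
        ≤ α * (lam * (breg ω us ubar u + breg ω (us - α • F u) u' ubar)) :=
          mul_le_mul_of_nonneg_left (hF u ubar u' us _ hu hubar) hα
      _ = lam * α * (breg ω us ubar u + breg ω (us - α • F u) u' ubar) := by ring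
      _ ≤ breg ω us ubar u + breg ω (us - α • F u) u' ubar :=
          mul_le_of_le_one_left (add_nonneg h₁ h₂) hstep
  rw [breg_extragradient_step_eq]
  linarith [mul_nonneg hα hz]

end Bregman

lemma norm_le_norm_add_sqrt_of_sq_norm_sub_le {E : Type*} [SeminormedAddCommGroup E]
    {μ B : ℝ} (hμ : 0 < μ) {u z : E} (h : μ / 2 * ‖u - z‖ ^ 2 ≤ B) :
    ‖u‖ ≤ ‖z‖ + √(2 * B / μ) := by
  have hsq : ‖u - z‖ ^ 2 ≤ 2 * B / μ := by
    rw [le_div_iff₀ hμ]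
    linarith
  linarith [norm_le_norm_add_norm_sub' u z, Real.le_sqrt_of_sq_le hsq]

/-- **Boundedness of Bregman extragradient iterates.** -/
theorem beg_iterates_bounded {d : ℕ} (μ lam : ℝ) (hμ : 0 < μ)
    (ω : EuclideanSpace ℝ (Fin d) → ℝ) (hω : StrongConvexOn Set.univ μ ω)
    (F : EuclideanSpace ℝ (Fin d) → EuclideanSpace ℝ (Fin d))
    (hF : RelLip lam F ω)
    (hmono : ∀ u v, 0 ≤ ⟪F u - F v, u - v⟫)
    (hzero : ∃ z, F z = 0)
    (α : ℕ → ℝ) (hα : ∀ k, 0 < α k)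
    (hstep : ∀ k, 0 < lam * α k ∧ lam * α k ≤ 1)
    (u ubar us : ℕ → EuclideanSpace ℝ (Fin d))
    (hsubu : ∀ k, IsSubgrad ω (u k) (us k))
    (hsubbar : ∀ k, IsSubgrad ω (ubar k) (us k - α k • F (u k)))
    (hupd : ∀ k, us (k + 1) = us k - α k • F (ubar k)) :
    ∃ C : ℝ, ∀ k, ‖u k‖ ≤ C := by
  obtain ⟨z, hz⟩ := hzero
  set D : ℕ → ℝ := fun k ↦ breg ω (us k) z (u k)
  have hD : Antitone D := antitone_nat_of_succ_le fun k ↦ by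
    have hzk : 0 ≤ ⟪F (ubar k), ubar k - z⟫ := by simpa [hz] using hmono (ubar k) z
    simpa only [D, hupd k] using
      breg_extragradient_step_le hF (hα k).le (hstep k).2 hzk (hsubu k) (hsubbar k)
  refine ⟨‖z‖ + √(2 * D 0 / μ), fun k ↦ norm_le_norm_add_sqrt_of_sq_norm_sub_le hμ ?_⟩
  calc μ / 2 * ‖u k - z‖ ^ 2 = μ / 2 * ‖z - u k‖ ^ 2 := by rw [norm_sub_rev]
    _ ≤ D k := (hsubu k).sq_norm_sub_le_breg hω z
    _ ≤ D 0 := hD (Nat.zero_le k)
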